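/- arXiv:2510.08461 — 2 statements merged into one kernel-verified Lean document; each statement's English description precedes it below -/
import Mathlib

section
/- Let G and G^v be n×n Hermitian positive semidefinite matrices with G^v ⪯ G, and ε > 0. Then Σᵢ λᵢ(G^v)/(λᵢ(G^v)+ε²) ≤ Σᵢ λᵢ(G)/(λᵢ(G)+ε²), where λᵢ denotes the i-th largest eigenvalue. -/
open Matrix
open scoped ComplexOrder
open scoped MatrixOrder

section helpers

variable {m : Type*} [Fintype m] [DecidableEq m]

lemma myPosDef_conj {C A : Matrix m m ℂ} (hA : A.PosDef) (hC : IsUnit C) :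
    (C * A * Cᴴ).PosDef := by
  refine Matrix.PosDef.of_dotProduct_mulVec_pos ?_ (fun x hx => ?_)
  · simp only [Matrix.IsHermitian, conjTranspose_mul, conjTranspose_conjTranspose, hA.1.eq,
      mul_assoc]
  · have hCH : IsUnit Cᴴ := by
      rw [Matrix.isUnit_iff_isUnit_det] at hC ⊢
      rwa [det_conjTranspose, isUnit_star]
    have hx' : Cᴴ *ᵥ x ≠ 0 := by
      intro h
      apply hx
      have := Matrix.mulVec_injective_iff_isUnit.mpr hCH
      exact this (by simpa using h)
    have hpos := hA.dotProduct_mulVec_pos hx'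
    have : star (Cᴴ *ᵥ x) ⬝ᵥ A *ᵥ Cᴴ *ᵥ x = star x ⬝ᵥ (C * A * Cᴴ) *ᵥ x := by
      simp only [star_mulVec, conjTranspose_conjTranspose, dotProduct_mulVec,
        vecMul_vecMul, Matrix.mul_assoc]
    rwa [this] at hpos

lemma myInv_sub_inv_posSemidef {A B : Matrix m m ℂ} (hA : A.PosDef) (hB : B.PosDef)
    (h : (B - A).PosSemidef) : (A⁻¹ - B⁻¹).PosSemidef := by
  set T := CFC.sqrt B with hTdef
  have hT : T.PosSemidef := (CFC.sqrt_nonneg B).posSemidef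
  have hTT : T * T = B := CFC.sqrt_mul_sqrt_self B hB.posSemidef.nonneg
  have hTdet : IsUnit T.det := by
    have : T.det * T.det = B.det := by rw [← det_mul, hTT]
    have hBdet : B.det ≠ 0 := hB.det_pos.ne'
    exact isUnit_iff_ne_zero.mpr (fun h0 => hBdet (by rw [← this, h0, zero_mul]))
  have hTunit : IsUnit T := (Matrix.isUnit_iff_isUnit_det T).mpr hTdet
  have hTiH : (T⁻¹).IsHermitian := hT.1.inv
  have hTiunit : IsUnit T⁻¹ := (Matrix.isUnit_nonsing_inv_iff).mpr hTunit
  set M := T⁻¹ * A * T⁻¹ with hMdef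
  have hM : M.PosDef := by
    have := myPosDef_conj hA hTiunit
    rwa [hTiH.eq] at this
  have h1 : (1 - M).PosSemidef := by
    have hconj := h.mul_mul_conjTranspose_same T⁻¹
    rw [hTiH.eq] at hconj
    have : T⁻¹ * (B - A) * T⁻¹ = 1 - M := by
      rw [Matrix.mul_sub, Matrix.sub_mul, hMdef, ← hTT]
      rw [← mul_assoc, Matrix.nonsing_inv_mul T hTdet, one_mul,
        Matrix.mul_nonsing_inv T hTdet]
    rwa [this] at hconj
  have hMinv : (M⁻¹).PosDef := hM.inv
  set S := CFC.sqrt M⁻¹ with hSdef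
  have hS : S.PosSemidef := (CFC.sqrt_nonneg M⁻¹).posSemidef
  have hSS : S * S = M⁻¹ := CFC.sqrt_mul_sqrt_self M⁻¹ hMinv.posSemidef.nonneg
  have hSdet : IsUnit S.det := by
    have : S.det * S.det = M⁻¹.det := by rw [← det_mul, hSS]
    have : S.det * S.det ≠ 0 := this ▸ hMinv.det_pos.ne'
    exact isUnit_iff_ne_zero.mpr (fun h0 => this (by rw [h0, zero_mul]))
  have hMunit : IsUnit M := hM.isUnit
  have hMdet : IsUnit M.det := (Matrix.isUnit_iff_isUnit_det M).mp hMunit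
  have h2 : (M⁻¹ - 1).PosSemidef := by
    have hconj := h1.mul_mul_conjTranspose_same S
    rw [hS.1.eq] at hconj
    have hSM : S * M * S = 1 := by
      have hMi : M = S⁻¹ * S⁻¹ := by
        rw [← Matrix.mul_inv_rev, hSS, Matrix.nonsing_inv_nonsing_inv M hMdet]
      rw [hMi, ← mul_assoc, mul_assoc (S * S⁻¹), Matrix.mul_nonsing_inv S hSdet,
        Matrix.nonsing_inv_mul S hSdet, one_mul]
    have : S * (1 - M) * S = M⁻¹ - 1 := by
      rw [Matrix.mul_sub, Matrix.sub_mul, mul_one, hSS, hSM]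
    rwa [this] at hconj
  have hconj := h2.mul_mul_conjTranspose_same T⁻¹
  rw [hTiH.eq] at hconj
  have hMinvEq : M⁻¹ = T * A⁻¹ * T := by
    rw [hMdef, Matrix.mul_inv_rev, Matrix.mul_inv_rev,
      Matrix.nonsing_inv_nonsing_inv T hTdet, mul_assoc]
  have : T⁻¹ * (M⁻¹ - 1) * T⁻¹ = A⁻¹ - B⁻¹ := by
    rw [Matrix.mul_sub, Matrix.sub_mul, mul_one, hMinvEq]
    rw [← mul_assoc, ← mul_assoc, Matrix.nonsing_inv_mul T hTdet, one_mul,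
      mul_assoc (A⁻¹), Matrix.mul_nonsing_inv T hTdet, mul_one, ← hTT,
      Matrix.mul_inv_rev]
  rwa [this] at hconj

lemma myTrace_nonneg {A : Matrix m m ℂ} (hA : A.PosSemidef) : 0 ≤ A.trace := by
  rw [Matrix.trace]
  apply Finset.sum_nonneg
  intro i _
  have := hA.dotProduct_mulVec_nonneg (Pi.single i 1)
  simpa [dotProduct, Matrix.mulVec, Pi.single_apply, Finset.sum_ite_eq,
    Matrix.diag] using this

lemma myTrace_inv_eq {H : Matrix m m ℂ} (hH : H.IsHermitian) (c : ℝ)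
    (hc : ∀ i, hH.eigenvalues i + c ≠ 0) :
    (H + (c : ℂ) • 1)⁻¹.trace = ((∑ i, (hH.eigenvalues i + c)⁻¹ : ℝ) : ℂ) := by
  set U : Matrix m m ℂ := (hH.eigenvectorUnitary : Matrix m m ℂ) with hUdef
  have hU1 : U * star U = 1 := (Matrix.mem_unitaryGroup_iff).mp hH.eigenvectorUnitary.2
  have hU2 : star U * U = 1 := (Matrix.mem_unitaryGroup_iff').mp hH.eigenvectorUnitary.2
  set d : m → ℂ := fun i => ((hH.eigenvalues i + c : ℝ) : ℂ) with hddef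
  have hd0 : ∀ i, d i ≠ 0 := fun i => by
    simp only [hddef, ne_eq, Complex.ofReal_eq_zero]
    exact hc i
  have key : H + (c : ℂ) • 1 = U * diagonal d * star U := by
    have hsp := hH.spectral_theorem
    simp only [Unitary.conjStarAlgAut_apply, Unitary.coe_star, ← hUdef] at hsp
    have : diagonal d = diagonal (RCLike.ofReal ∘ hH.eigenvalues) + (c : ℂ) • 1 := by
      rw [Matrix.smul_one_eq_diagonal, Matrix.diagonal_add]
      funext i
      simp [hddef]
    rw [this, Matrix.mul_add, Matrix.add_mul, ← hsp]
    congr 1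
    rw [Matrix.mul_smul, Matrix.smul_mul, mul_one, hU1]
  have hinv : (U * diagonal d * star U)⁻¹ = U * diagonal (fun i => (d i)⁻¹) * star U := by
    apply Matrix.inv_eq_left_inv
    rw [mul_assoc, mul_assoc, ← mul_assoc (star U), ← mul_assoc (star U), hU2, one_mul,
      ← mul_assoc, ← mul_assoc, mul_assoc U, Matrix.diagonal_mul_diagonal]
    have : (fun i => (d i)⁻¹ * d i) = fun _ => (1 : ℂ) := by
      funext i; exact inv_mul_cancel₀ (hd0 i)
    rw [this, Matrix.diagonal_one, mul_one, hU1]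
  rw [key, hinv, Matrix.trace_mul_cycle, hU2, one_mul, Matrix.trace_diagonal]
  simp only [hddef]
  push_cast
  rfl

end helpers

/-- If `G^v ⪯ G` are Hermitian positive semidefinite and `ε > 0`,
then `Σᵢ λᵢ(G^v)/(λᵢ(G^v)+ε²) ≤ Σᵢ λᵢ(G)/(λᵢ(G)+ε²)`. -/
theorem stmt8 {n : ℕ} (G Gv : Matrix (Fin n) (Fin n) ℂ)
    (hG : G.PosSemidef) (hGv : Gv.PosSemidef) (hle : (G - Gv).PosSemidef)
    (ε : ℝ) (hε : 0 < ε) :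
    ∑ i, hGv.1.eigenvalues i / (hGv.1.eigenvalues i + ε ^ 2) ≤
      ∑ i, hG.1.eigenvalues i / (hG.1.eigenvalues i + ε ^ 2) := by
  set c : ℝ := ε ^ 2 with hcdef
  have hc : 0 < c := by positivity
  have hcI : ((c : ℂ) • (1 : Matrix (Fin n) (Fin n) ℂ)).PosDef := by
    rw [Matrix.smul_one_eq_diagonal]
    rw [Matrix.posDef_diagonal_iff]
    intro i
    exact_mod_cast hc
  set A : Matrix (Fin n) (Fin n) ℂ := Gv + (c : ℂ) • 1 with hAdef
  set B : Matrix (Fin n) (Fin n) ℂ := G + (c : ℂ) • 1 with hBdef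
  have hA : A.PosDef := Matrix.PosDef.posSemidef_add hGv hcI
  have hB : B.PosDef := Matrix.PosDef.posSemidef_add hG hcI
  have hBA : (B - A).PosSemidef := by
    have : B - A = G - Gv := by rw [hAdef, hBdef]; abel
    rw [this]; exact hle
  have key := myInv_sub_inv_posSemidef hA hB hBA
  have hGvne : ∀ i, hGv.1.eigenvalues i + c ≠ 0 :=
    fun i => (add_pos_of_nonneg_of_pos (hGv.eigenvalues_nonneg i) hc).ne'
  have hGne : ∀ i, hG.1.eigenvalues i + c ≠ 0 :=
    fun i => (add_pos_of_nonneg_of_pos (hG.eigenvalues_nonneg i) hc).ne'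
  have htrA : A⁻¹.trace = ((∑ i, (hGv.1.eigenvalues i + c)⁻¹ : ℝ) : ℂ) :=
    myTrace_inv_eq hGv.1 c hGvne
  have htrB : B⁻¹.trace = ((∑ i, (hG.1.eigenvalues i + c)⁻¹ : ℝ) : ℂ) :=
    myTrace_inv_eq hG.1 c hGne
  have htr : (0 : ℂ) ≤ A⁻¹.trace - B⁻¹.trace := by
    rw [← Matrix.trace_sub]
    exact myTrace_nonneg key
  have hsum : ∑ i, (hG.1.eigenvalues i + c)⁻¹ ≤ ∑ i, (hGv.1.eigenvalues i + c)⁻¹ := by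
    rw [htrA, htrB, ← Complex.ofReal_sub] at htr
    have := (Complex.zero_le_real).mp htr
    linarith
  have hterm : ∀ (x : ℝ), x + c ≠ 0 → x / (x + c) = 1 - c * (x + c)⁻¹ := by
    intro x hx
    field_simp
    ring
  calc ∑ i, hGv.1.eigenvalues i / (hGv.1.eigenvalues i + c)
      = ∑ i, (1 - c * (hGv.1.eigenvalues i + c)⁻¹) := by
        exact Finset.sum_congr rfl fun i _ => hterm _ (hGvne i)
    _ = (n : ℝ) - c * ∑ i, (hGv.1.eigenvalues i + c)⁻¹ := by
        rw [Finset.sum_sub_distrib, Finset.sum_const, ← Finset.mul_sum]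
        simp
    _ ≤ (n : ℝ) - c * ∑ i, (hG.1.eigenvalues i + c)⁻¹ := by
        have := mul_le_mul_of_nonneg_left hsum hc.le
        linarith
    _ = ∑ i, (1 - c * (hG.1.eigenvalues i + c)⁻¹) := by
        rw [Finset.sum_sub_distrib, Finset.sum_const, ← Finset.mul_sum]
        simp
    _ = ∑ i, hG.1.eigenvalues i / (hG.1.eigenvalues i + c) := by
        exact (Finset.sum_congr rfl fun i _ => hterm _ (hGne i)).symm
end

section
/- Let G and H be n×n Hermitian matrices. Then there exists a permutation τ of {1,...,n} such that |λᵢ(G) - λ_{τ(i)}(H)| ≤ ‖G - H‖_F for all i, where ‖·‖_F is the Frobenius norm (Hoffman–Wielandt inequality for Hermitian matrices). -/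
open Matrix Finset

namespace HW
variable {n : ℕ}

local notation "⟪" x ", " y "⟫" => @inner ℂ _ _ x y

/-- eigen-equation for toEuclideanLin -/
lemma eigen_eq {G : Matrix (Fin n) (Fin n) ℂ} (hG : G.IsHermitian) (j : Fin n) :
    Matrix.toEuclideanLin G (hG.eigenvectorBasis j)
      = (hG.eigenvalues j : ℂ) • hG.eigenvectorBasis j := by
  have h := hG.mulVec_eigenvectorBasis j
  apply (WithLp.equiv 2 _).injective
  ext i
  simpa [Matrix.toEuclideanLin_apply] using congrFun h i

lemma repr_toEuclideanLin {G : Matrix (Fin n) (Fin n) ℂ} (hG : G.IsHermitian)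
    (v : EuclideanSpace ℂ (Fin n)) (j : Fin n) :
    hG.eigenvectorBasis.repr (Matrix.toEuclideanLin G v) j
      = (hG.eigenvalues j : ℂ) * hG.eigenvectorBasis.repr v j := by
  rw [OrthonormalBasis.repr_apply_apply, OrthonormalBasis.repr_apply_apply,
    ← (Matrix.isHermitian_iff_isSymmetric.1 hG) _ v, eigen_eq hG j, inner_smul_left,
    Complex.conj_ofReal]

lemma rayleigh_eq {G : Matrix (Fin n) (Fin n) ℂ} (hG : G.IsHermitian)
    (v : EuclideanSpace ℂ (Fin n)) :
    Complex.re ⟪v, Matrix.toEuclideanLin G v⟫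
      = ∑ j, hG.eigenvalues j * ‖hG.eigenvectorBasis.repr v j‖ ^ 2 := by
  rw [← hG.eigenvectorBasis.repr.inner_map_map v (Matrix.toEuclideanLin G v)]
  rw [PiLp.inner_apply]
  rw [Complex.re_sum]
  refine Finset.sum_congr rfl fun j _ => ?_
  rw [repr_toEuclideanLin hG v j, RCLike.inner_apply]
  set c := hG.eigenvectorBasis.repr v j
  have h1 : (hG.eigenvalues j : ℂ) * c * (starRingEnd ℂ) c
      = (hG.eigenvalues j : ℂ) * ((starRingEnd ℂ) c * c) := by ring
  rw [h1, ← Complex.normSq_eq_conj_mul_self]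
  simp [Complex.sq_norm, ← Complex.ofReal_mul]

lemma norm_sq_eq {G : Matrix (Fin n) (Fin n) ℂ} (hG : G.IsHermitian)
    (v : EuclideanSpace ℂ (Fin n)) :
    ‖v‖ ^ 2 = ∑ j, ‖hG.eigenvectorBasis.repr v j‖ ^ 2 := by
  rw [← hG.eigenvectorBasis.repr.norm_map v, EuclideanSpace.norm_eq,
    Real.sq_sqrt (by positivity)]

lemma repr_eq_zero {G : Matrix (Fin n) (Fin n) ℂ} (hG : G.IsHermitian)
    (s : Finset (Fin n)) {v : EuclideanSpace ℂ (Fin n)}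
    (hv : v ∈ Submodule.span ℂ (hG.eigenvectorBasis '' s)) {j : Fin n} (hj : j ∉ s) :
    hG.eigenvectorBasis.repr v j = 0 := by
  induction hv using Submodule.span_induction with
  | mem x hx =>
      obtain ⟨i, his, rfl⟩ := hx
      rw [OrthonormalBasis.repr_apply_apply]
      exact hG.eigenvectorBasis.orthonormal.2 (fun h => hj (h ▸ his))
  | zero => simp
  | add x y _ _ hx hy => simp [hx, hy]
  | smul a x _ hx => simp [hx]

lemma finrank_span {G : Matrix (Fin n) (Fin n) ℂ} (hG : G.IsHermitian) (s : Finset (Fin n)) :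
    Module.finrank ℂ (Submodule.span ℂ (hG.eigenvectorBasis '' s)) = s.card := by
  have li : LinearIndependent ℂ (fun x : {x // x ∈ s} => hG.eigenvectorBasis ↑x) :=
    hG.eigenvectorBasis.orthonormal.linearIndependent.comp _ Subtype.val_injective
  rw [Set.image_eq_range]
  have h := finrank_span_eq_card li
  rw [Fintype.card_coe] at h
  exact h


lemma frob_bound (M : Matrix (Fin n) (Fin n) ℂ) (v : EuclideanSpace ℂ (Fin n)) :
    ‖Matrix.toEuclideanLin M v‖ ≤
      Real.sqrt (∑ i, ∑ j, ‖M i j‖ ^ 2) * ‖v‖ := by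
  set w := Matrix.toEuclideanLin M v with hw
  have hrow : ∀ i, ‖w i‖ ^ 2 ≤ (∑ j, ‖M i j‖ ^ 2) * ‖v‖ ^ 2 := by
    intro i
    set r : EuclideanSpace ℂ (Fin n) := (WithLp.equiv 2 _).symm (fun j => (starRingEnd ℂ) (M i j)) with hr
    have h1 : w i = ⟪r, v⟫ := by
      rw [PiLp.inner_apply]
      simp [hw, Matrix.toEuclideanLin_apply, Matrix.mulVec, dotProduct, hr, mul_comm]
    have h2 : ‖r‖ ^ 2 = ∑ j, ‖M i j‖ ^ 2 := by
      rw [EuclideanSpace.norm_eq, Real.sq_sqrt (by positivity)]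
      simp [hr]
    have h3 : ‖w i‖ ≤ ‖r‖ * ‖v‖ := h1 ▸ norm_inner_le_norm r v
    calc ‖w i‖ ^ 2 ≤ (‖r‖ * ‖v‖) ^ 2 := by
          have := norm_nonneg (w i); nlinarith [norm_nonneg r, norm_nonneg v]
      _ = (∑ j, ‖M i j‖ ^ 2) * ‖v‖ ^ 2 := by rw [← h2]; ring
  have hnw : ‖w‖ ^ 2 ≤ (∑ i, ∑ j, ‖M i j‖ ^ 2) * ‖v‖ ^ 2 := by
    rw [EuclideanSpace.norm_eq, Real.sq_sqrt (by positivity), Finset.sum_mul]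
    exact Finset.sum_le_sum fun i _ => hrow i
  have h4 : ‖w‖ ≤ Real.sqrt ((∑ i, ∑ j, ‖M i j‖ ^ 2) * ‖v‖ ^ 2) := by
    rw [← Real.sqrt_sq (norm_nonneg w)]
    exact Real.sqrt_le_sqrt hnw
  calc ‖w‖ ≤ _ := h4
    _ = Real.sqrt (∑ i, ∑ j, ‖M i j‖ ^ 2) * ‖v‖ := by
        rw [Real.sqrt_mul (by positivity), Real.sqrt_sq (norm_nonneg v)]


lemma rayleigh_ge {G : Matrix (Fin n) (Fin n) ℂ} (hG : G.IsHermitian)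
    (s : Finset (Fin n)) {v : EuclideanSpace ℂ (Fin n)}
    (hv : v ∈ Submodule.span ℂ (hG.eigenvectorBasis '' s)) {a : ℝ}
    (ha : ∀ j ∈ s, a ≤ hG.eigenvalues j) :
    a * ‖v‖ ^ 2 ≤ Complex.re ⟪v, Matrix.toEuclideanLin G v⟫ := by
  rw [rayleigh_eq hG v, norm_sq_eq hG v, Finset.mul_sum]
  refine Finset.sum_le_sum fun j _ => ?_
  by_cases hj : j ∈ s
  · exact mul_le_mul_of_nonneg_right (ha j hj) (by positivity)
  · rw [repr_eq_zero hG s hv hj]; simp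

lemma rayleigh_le {G : Matrix (Fin n) (Fin n) ℂ} (hG : G.IsHermitian)
    (s : Finset (Fin n)) {v : EuclideanSpace ℂ (Fin n)}
    (hv : v ∈ Submodule.span ℂ (hG.eigenvectorBasis '' s)) {b : ℝ}
    (hb : ∀ j ∈ s, hG.eigenvalues j ≤ b) :
    Complex.re ⟪v, Matrix.toEuclideanLin G v⟫ ≤ b * ‖v‖ ^ 2 := by
  rw [rayleigh_eq hG v, norm_sq_eq hG v, Finset.mul_sum]
  refine Finset.sum_le_sum fun j _ => ?_
  by_cases hj : j ∈ s
  · exact mul_le_mul_of_nonneg_right (hb j hj) (by positivity)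
  · rw [repr_eq_zero hG s hv hj]; simp

lemma exists_common (U W : Submodule ℂ (EuclideanSpace ℂ (Fin n)))
    (h : n < Module.finrank ℂ U + Module.finrank ℂ W) :
    ∃ v : EuclideanSpace ℂ (Fin n), v ≠ 0 ∧ v ∈ U ∧ v ∈ W := by
  have hne : U ⊓ W ≠ ⊥ := by
    intro hbot
    have := Submodule.finrank_sup_add_finrank_inf_eq U W
    rw [hbot] at this
    have h1 : Module.finrank ℂ (U ⊔ W : Submodule ℂ (EuclideanSpace ℂ (Fin n))) ≤ n := by
      simpa [finrank_euclideanSpace] using Submodule.finrank_le (U ⊔ W)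
    simp [finrank_bot] at this
    omega
  obtain ⟨v, hv, hv0⟩ := Submodule.exists_mem_ne_zero_of_ne_bot hne
  exact ⟨v, hv0, hv.1, hv.2⟩

/-- one-sided Weyl inequality for sorted eigenvalues -/
lemma weyl (G H : Matrix (Fin n) (Fin n) ℂ) (hG : G.IsHermitian) (hH : H.IsHermitian)
    (k : Fin n) :
    hG.eigenvalues (Tuple.sort hG.eigenvalues k) ≤
      hH.eigenvalues (Tuple.sort hH.eigenvalues k) +
        Real.sqrt (∑ i, ∑ j, ‖G i j - H i j‖ ^ 2) := by
  set p := Tuple.sort hG.eigenvalues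
  set q := Tuple.sort hH.eigenvalues
  set ε := Real.sqrt (∑ i, ∑ j, ‖G i j - H i j‖ ^ 2) with hε
  set sU : Finset (Fin n) := (Finset.Ici k).image p with hsU
  set sW : Finset (Fin n) := (Finset.Iic k).image q with hsW
  set U := Submodule.span ℂ (hG.eigenvectorBasis '' sU)
  set W := Submodule.span ℂ (hH.eigenvectorBasis '' sW)
  have hcard : n < Module.finrank ℂ U + Module.finrank ℂ W := by
    rw [finrank_span hG, finrank_span hH, hsU, hsW,
      Finset.card_image_of_injective _ p.injective,
      Finset.card_image_of_injective _ q.injective, Fin.card_Ici, Fin.card_Iic]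
    omega
  obtain ⟨v, hv0, hvU, hvW⟩ := exists_common U W hcard
  have hvpos : (0:ℝ) < ‖v‖ ^ 2 := pow_pos (norm_pos_iff.mpr hv0) 2
  have h1 : hG.eigenvalues (p k) * ‖v‖ ^ 2 ≤ Complex.re ⟪v, Matrix.toEuclideanLin G v⟫ := by
    refine rayleigh_ge hG sU hvU fun j hj => ?_
    rw [hsU, Finset.mem_image] at hj
    obtain ⟨m, hm, rfl⟩ := hj
    exact Tuple.monotone_sort hG.eigenvalues (Finset.mem_Ici.1 hm)
  have h2 : Complex.re ⟪v, Matrix.toEuclideanLin H v⟫ ≤ hH.eigenvalues (q k) * ‖v‖ ^ 2 := by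
    refine rayleigh_le hH sW hvW fun j hj => ?_
    rw [hsW, Finset.mem_image] at hj
    obtain ⟨m, hm, rfl⟩ := hj
    exact Tuple.monotone_sort hH.eigenvalues (Finset.mem_Iic.1 hm)
  have h3 : Complex.re ⟪v, Matrix.toEuclideanLin G v⟫
      - Complex.re ⟪v, Matrix.toEuclideanLin H v⟫ ≤ ε * ‖v‖ ^ 2 := by
    have hsub : Matrix.toEuclideanLin G v - Matrix.toEuclideanLin H v
        = Matrix.toEuclideanLin (G - H) v := by
      rw [map_sub]; rfl
    calc Complex.re ⟪v, Matrix.toEuclideanLin G v⟫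
          - Complex.re ⟪v, Matrix.toEuclideanLin H v⟫
        = Complex.re ⟪v, Matrix.toEuclideanLin (G - H) v⟫ := by
          rw [← hsub, inner_sub_right, Complex.sub_re]
      _ ≤ ‖⟪v, Matrix.toEuclideanLin (G - H) v⟫‖ := Complex.re_le_norm _
      _ ≤ ‖v‖ * ‖Matrix.toEuclideanLin (G - H) v‖ := norm_inner_le_norm _ _
      _ ≤ ‖v‖ * (ε * ‖v‖) := by
          refine mul_le_mul_of_nonneg_left ?_ (norm_nonneg v)
          simpa using frob_bound (G - H) v
      _ = ε * ‖v‖ ^ 2 := by ring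
  nlinarith [h1, h2, h3]

end HW

/-- Hoffman–Wielandt for Hermitian matrices: For Hermitian `G`,
`H` there is a permutation `τ` such that `|λᵢ(G) - λ_{τ(i)}(H)| ≤ ‖G - H‖_F`
for all `i`, where `‖·‖_F` is the Frobenius norm. -/
theorem stmt19 {n : ℕ} (G H : Matrix (Fin n) (Fin n) ℂ)
    (hG : G.IsHermitian) (hH : H.IsHermitian) :
    ∃ τ : Equiv.Perm (Fin n), ∀ i,
      |hG.eigenvalues i - hH.eigenvalues (τ i)| ≤
        Real.sqrt (∑ i, ∑ j, ‖G i j - H i j‖ ^ 2) := by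
  refine ⟨(Tuple.sort hG.eigenvalues).symm.trans (Tuple.sort hH.eigenvalues), fun i => ?_⟩
  set p := Tuple.sort hG.eigenvalues
  set q := Tuple.sort hH.eigenvalues
  set k := p.symm i with hk
  have hi : i = p k := by rw [hk, Equiv.apply_symm_apply]
  have hsymm : Real.sqrt (∑ i, ∑ j, ‖H i j - G i j‖ ^ 2)
      = Real.sqrt (∑ i, ∑ j, ‖G i j - H i j‖ ^ 2) := by
    congr 1
    refine Finset.sum_congr rfl fun a _ => Finset.sum_congr rfl fun b _ => ?_
    rw [norm_sub_rev]
  rw [abs_sub_le_iff]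
  constructor
  · have := HW.weyl G H hG hH k
    rw [← hi] at this
    simpa [Equiv.trans_apply] using by linarith
  · have := HW.weyl H G hH hG k
    rw [hsymm, ← hi] at this
    simpa [Equiv.trans_apply] using by linarith
end
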